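/- arXiv:2301.07400 — 5 statements merged into one kernel-verified Lean document; each statement's English description precedes it below -/
import Mathlib

section
/- Let R be the curvature tensor of Proposition 3.1: R(x,y)z = (κ/4)(3τ²-4)[g(y,z)x - g(x,z)y] + κ(τ²-1)[g(y,e1)g(z,e1)x - g(x,e1)g(z,e1)y + g(y,z)g(x,e1)e1 - g(x,z)g(y,e1)e1]. If x, y is a pseudo-orthonormal pair with g(x,x)=1, g(y,y)=-λ (λ=±1), g(x,y)=0, spanning a tangent plane to a surface whose normal n satisfies g(n,n)=λ and g(n,e1)=λν, then the ambient sectional curvature of the plane span{x,y} is K̄ = -λ g(R(x,y)y,x) = -(κ/4)τ² + κλν²(1-τ²). -/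
/-- For the curvature tensor of Proposition 3.1 and a pseudo-orthonormal
pair x, y (g(x,x)=1, g(y,y)=-λ, g(x,y)=0) spanning a tangent plane with normal n
(g(n,n)=λ, e1 = t + νn with t in span{x,y}), the ambient sectional curvature is
K̄ = -λ g(R(x,y)y,x) = -(κ/4)τ² + κλν²(1-τ²). -/
theorem sectional_curvature_of_tangent_plane {V : Type*} [AddCommGroup V] [Module ℝ V]
    (g : V →ₗ[ℝ] V →ₗ[ℝ] ℝ) (hgsymm : ∀ u v, g u v = g v u)
    (κ τ lam ν : ℝ) (hκ : 0 < κ) (hτ : 0 < τ) (hlam : lam = 1 ∨ lam = -1)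
    (e1 n t x y : V) (a b : ℝ)
    (he1 : g e1 e1 = -1)
    (hdec : e1 = t + ν • n)
    (hn : g n n = lam) (hne1 : g n e1 = lam * ν)
    (hnx : g n x = 0) (hny : g n y = 0)
    (hx : g x x = 1) (hy : g y y = -lam) (hxy : g x y = 0)
    (ht : t = a • x + b • y)
    (R : V → V → V → V)
    (hR : R = fun X Y Z =>
      (κ / 4 * (3 * τ ^ 2 - 4) * g Y Z) • X - (κ / 4 * (3 * τ ^ 2 - 4) * g X Z) • Y
      + (κ * (τ ^ 2 - 1) * g Y e1 * g Z e1) • X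
      - (κ * (τ ^ 2 - 1) * g X e1 * g Z e1) • Y
      + (κ * (τ ^ 2 - 1) * g Y Z * g X e1) • e1
      - (κ * (τ ^ 2 - 1) * g X Z * g Y e1) • e1) :
    -lam * g (R x y y) x = -(κ / 4) * τ ^ 2 + κ * lam * ν ^ 2 * (1 - τ ^ 2) := by
  have hxe1 : g x e1 = a := by
    rw [hdec, ht]; simp [map_add, map_smul, hx, hxy, hgsymm x n, hnx]
  have hye1 : g y e1 = -(lam * b) := by
    rw [hdec, ht]; simp [map_add, map_smul, hy, hgsymm y x, hxy, hgsymm y n, hny]; ring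
  have he1x : g e1 x = a := by rw [hgsymm]; exact hxe1
  have hlam2 : lam ^ 2 = 1 := by rcases hlam with h | h <;> simp [h]
  have hab : a ^ 2 - lam * b ^ 2 = -1 - lam * ν ^ 2 := by
    have := he1
    rw [hdec, ht] at this
    simp [map_add, map_smul, hx, hy, hxy, hgsymm y x, hnx, hny, hgsymm x n, hgsymm y n, hn] at this
    nlinarith [this]
  rw [hR]
  simp only [map_add, map_sub, map_smul, LinearMap.add_apply, LinearMap.sub_apply,
    LinearMap.smul_apply, smul_eq_mul]
  have hyx : g y x = 0 := by rw [hgsymm]; exact hxy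
  rw [hx, hxy, hy, hxe1, hye1, he1x, hyx]
  rcases hlam with h | h <;> subst h <;> linear_combination κ * (τ ^ 2 - 1) * hab
end

section
/- Let F: ℝ² → ℝ^4 be smooth and satisfy the first-order linear system ∂_x F1 = c[-(λ/τ)√(λ+ν²) F2 - ν cosφ F3 - ν sinφ F4], ∂_x F2 = c[(λ/τ)√(λ+ν²) F1 + ν cosφ F4 - ν sinφ F3], ∂_x F3 = c[-(λ/τ)√(λ+ν²) F4 - ν cosφ F1 - ν sinφ F2], ∂_x F4 = c[(λ/τ)√(λ+ν²) F3 + ν cosφ F2 - ν sinφ F1], where c = √(κ(λ+ν²))/2 and φ(x) = -(√κ/(λτ))B x + c0 with B = ν²(τ²-1) - λ ≠ 0. Then each component of F satisfies the fourth-order linear ODE ∂_x^4 F + (b̃² + 2ã) ∂_x² F + ã² F = 0, where ã = (κ/4)(B/τ²)(λ+ν²) and b̃ = -√κ B/(λτ). -/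
theorem fourth_order_key (A m b a : ℝ) (ha : a = m ^ 2 - A ^ 2) (hAb : A * b = -2 * a)
    (f g P Q : ℝ → ℝ)
    (hf : ∀ x, HasDerivAt f (-A * g x + m * Q x) x)
    (hg : ∀ x, HasDerivAt g (A * f x - m * P x) x)
    (hP : ∀ x, HasDerivAt P (-(b - A) * Q x - m * g x) x)
    (hQ : ∀ x, HasDerivAt Q ((b - A) * P x + m * f x) x) :
    ∀ x, deriv^[4] f x + (b ^ 2 + 2 * a) * deriv^[2] f x + a ^ 2 * f x = 0 := by
  intro x
  set e2 : ℝ := -(a * A) - m ^ 2 * b with he2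
  set e2q : ℝ := a * m - m * b ^ 2 + m * b * A with he2q
  have h2 : ∀ x, HasDerivAt (fun x => -A * g x + m * Q x) (a * f x + m * b * P x) x := by
    intro x
    have := ((hg x).const_mul (-A)).add ((hQ x).const_mul m)
    convert this using 1
    rfl
    rfl
    rfl
    linear_combination f x * ha
  have h3 : ∀ x, HasDerivAt (fun x => a * f x + m * b * P x) (e2 * g x + e2q * Q x) x := by
    intro x
    have := ((hf x).const_mul a).add ((hP x).const_mul (m * b))
    convert this using 1
    rfl
    rfl
    rfl
    rw [he2, he2q]; ring
  have h4 : ∀ x, HasDerivAt (fun x => e2 * g x + e2q * Q x)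
      (e2 * (A * f x - m * P x) + e2q * ((b - A) * P x + m * f x)) x := by
    intro x
    exact ((hg x).const_mul e2).add ((hQ x).const_mul e2q)
  have d1 : deriv f = fun x => -A * g x + m * Q x := funext fun x => (hf x).deriv
  have d2 : deriv (deriv f) = fun x => a * f x + m * b * P x := by
    rw [d1]; exact funext fun x => (h2 x).deriv
  have d3 : deriv (deriv (deriv f)) = fun x => e2 * g x + e2q * Q x := by
    rw [d2]; exact funext fun x => (h3 x).deriv
  have d4 : deriv (deriv (deriv (deriv f))) =
      fun x => e2 * (A * f x - m * P x) + e2q * ((b - A) * P x + m * f x) := by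
    rw [d3]; exact funext fun x => (h4 x).deriv
  have e2' : deriv^[2] f x = a * f x + m * b * P x := by
    rw [show (2 : ℕ) = 1 + 1 from rfl]
    rw [Function.iterate_succ_apply', Function.iterate_one, d2]
  have e4' : deriv^[4] f x =
      e2 * (A * f x - m * P x) + e2q * ((b - A) * P x + m * f x) := by
    rw [show (4 : ℕ) = 3 + 1 from rfl, Function.iterate_succ_apply']
    rw [show (3 : ℕ) = 2 + 1 from rfl, Function.iterate_succ_apply']
    rw [show (2 : ℕ) = 1 + 1 from rfl, Function.iterate_succ_apply', Function.iterate_one]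
    rw [d4]
  rw [e2', e4']
  have hb2 : A ^ 2 * b ^ 2 = 4 * a ^ 2 := by nlinarith [hAb]
  have h1c : e2 * A + e2q * m + (b ^ 2 + 2 * a) * a + a ^ 2 = 0 := by
    rw [he2, he2q]; nlinarith [ha, hb2]
  have h2c : -(e2 * m) + e2q * (b - A) + (b ^ 2 + 2 * a) * (m * b) = 0 := by
    rw [he2, he2q]; linear_combination (-(m * b)) * ha + (2 * m * b) * hAb
  linear_combination f x * h1c + P x * h2c

set_option maxHeartbeats 1000000 in
/-- Proposition 5.5(b): if the components of F satisfy the first-order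
frame system, then each component satisfies the fourth-order linear ODE
∂ₓ⁴F + (b̃² + 2ã)∂ₓ²F + ã²F = 0, with ã = (κ/4)(B/τ²)(λ+ν²), b̃ = -√κ B/(λτ). -/
theorem helix_position_fourth_order_ode (κ τ lam ν c0 : ℝ)
    (hκ : 0 < κ) (hτ : 0 < τ) (hlam : lam = 1 ∨ lam = -1)
    (hpos : 0 < lam + ν ^ 2) (hB : ν ^ 2 * (τ ^ 2 - 1) - lam ≠ 0)
    (B c atil btil : ℝ) (φ : ℝ → ℝ)
    (hBdef : B = ν ^ 2 * (τ ^ 2 - 1) - lam)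
    (hc : c = Real.sqrt (κ * (lam + ν ^ 2)) / 2)
    (hφ : φ = fun x => -(Real.sqrt κ / (lam * τ)) * B * x + c0)
    (hat : atil = κ / 4 * (B / τ ^ 2) * (lam + ν ^ 2))
    (hbt : btil = -Real.sqrt κ * B / (lam * τ))
    (F1 F2 F3 F4 : ℝ → ℝ → ℝ)
    (hsm1 : ∀ y, ContDiff ℝ (⊤ : ℕ∞) fun x => F1 x y)
    (hsm2 : ∀ y, ContDiff ℝ (⊤ : ℕ∞) fun x => F2 x y)
    (hsm3 : ∀ y, ContDiff ℝ (⊤ : ℕ∞) fun x => F3 x y)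
    (hsm4 : ∀ y, ContDiff ℝ (⊤ : ℕ∞) fun x => F4 x y)
    (hsys1 : ∀ y x, HasDerivAt (fun x => F1 x y)
      (c * (-(lam / τ) * Real.sqrt (lam + ν ^ 2) * F2 x y
        - ν * Real.cos (φ x) * F3 x y - ν * Real.sin (φ x) * F4 x y)) x)
    (hsys2 : ∀ y x, HasDerivAt (fun x => F2 x y)
      (c * ((lam / τ) * Real.sqrt (lam + ν ^ 2) * F1 x y
        + ν * Real.cos (φ x) * F4 x y - ν * Real.sin (φ x) * F3 x y)) x)
    (hsys3 : ∀ y x, HasDerivAt (fun x => F3 x y)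
      (c * (-(lam / τ) * Real.sqrt (lam + ν ^ 2) * F4 x y
        - ν * Real.cos (φ x) * F1 x y - ν * Real.sin (φ x) * F2 x y)) x)
    (hsys4 : ∀ y x, HasDerivAt (fun x => F4 x y)
      (c * ((lam / τ) * Real.sqrt (lam + ν ^ 2) * F3 x y
        + ν * Real.cos (φ x) * F2 x y - ν * Real.sin (φ x) * F1 x y)) x) :
    ∀ y x,
      (deriv^[4] (fun x => F1 x y) x + (btil ^ 2 + 2 * atil) * deriv^[2] (fun x => F1 x y) x
        + atil ^ 2 * F1 x y = 0) ∧
      (deriv^[4] (fun x => F2 x y) x + (btil ^ 2 + 2 * atil) * deriv^[2] (fun x => F2 x y) x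
        + atil ^ 2 * F2 x y = 0) ∧
      (deriv^[4] (fun x => F3 x y) x + (btil ^ 2 + 2 * atil) * deriv^[2] (fun x => F3 x y) x
        + atil ^ 2 * F3 x y = 0) ∧
      (deriv^[4] (fun x => F4 x y) x + (btil ^ 2 + 2 * atil) * deriv^[2] (fun x => F4 x y) x
        + atil ^ 2 * F4 x y = 0) := by
  intro y
  -- abbreviations
  set s : ℝ := Real.sqrt (lam + ν ^ 2) with hs
  set k : ℝ := Real.sqrt κ with hk
  have hs2 : s ^ 2 = lam + ν ^ 2 := Real.sq_sqrt hpos.le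
  have hk2 : k ^ 2 = κ := Real.sq_sqrt hκ.le
  have hlam2 : lam ^ 2 = 1 := by rcases hlam with h | h <;> rw [h] <;> norm_num
  have hlamne : lam ≠ 0 := by rcases hlam with h | h <;> rw [h] <;> norm_num
  have hτne : τ ≠ 0 := hτ.ne'
  have hck : c = k * s / 2 := by rw [hc, Real.sqrt_mul hκ.le]
  set A : ℝ := c * (lam / τ) * s with hA
  set m : ℝ := c * ν with hm
  have hc2 : 4 * c ^ 2 = κ * (lam + ν ^ 2) := by
    rw [hck]
    linear_combination s ^ 2 * hk2 + κ * hs2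
  have hA2 : A ^ 2 * τ ^ 2 = c ^ 2 * s ^ 2 := by
    rw [hA]; field_simp
    linear_combination c ^ 2 * s ^ 2 * hlam2
  have h5 : atil * (4 * τ ^ 2) = κ * B * (lam + ν ^ 2) := by
    rw [hat]; field_simp
  have h6 : (m ^ 2 - A ^ 2) * (4 * τ ^ 2) = κ * B * (lam + ν ^ 2) := by
    rw [hm, hBdef]
    linear_combination (ν ^ 2 * τ ^ 2 - (lam + ν ^ 2)) * hc2 - 4 * c ^ 2 * hs2 - 4 * hA2
  have hτ2ne : (4 : ℝ) * τ ^ 2 ≠ 0 := by positivity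
  have hta : atil = m ^ 2 - A ^ 2 := mul_right_cancel₀ hτ2ne (h5.trans h6.symm)
  have h7 : A * btil * (2 * τ ^ 2) = -(κ * (lam + ν ^ 2) * B) := by
    rw [hA, hbt, hck]
    field_simp
    linear_combination (-(B * s ^ 2)) * hk2 + (-(B * κ)) * hs2
  have h8 : -2 * atil * (2 * τ ^ 2) = -(κ * (lam + ν ^ 2) * B) := by
    rw [hat]; field_simp; ring
  have hτ2ne' : (2 : ℝ) * τ ^ 2 ≠ 0 := by positivity
  have hAb : A * btil = -2 * atil := mul_right_cancel₀ hτ2ne' (h7.trans h8.symm)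
  -- functions
  set f1 : ℝ → ℝ := fun x => F1 x y with hf1
  set f2 : ℝ → ℝ := fun x => F2 x y with hf2
  set f3 : ℝ → ℝ := fun x => F3 x y with hf3
  set f4 : ℝ → ℝ := fun x => F4 x y with hf4
  set C : ℝ → ℝ := fun x => Real.cos (φ x) with hCdef
  set S : ℝ → ℝ := fun x => Real.sin (φ x) with hSdef
  set Q1 : ℝ → ℝ := fun x => S x * f3 x - C x * f4 x with hQ1def
  set Q2 : ℝ → ℝ := fun x => -(C x * f3 x + S x * f4 x) with hQ2def
  set Q3 : ℝ → ℝ := fun x => S x * f1 x - C x * f2 x with hQ3def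
  set Q4 : ℝ → ℝ := fun x => -(C x * f1 x + S x * f2 x) with hQ4def
  -- derivative of phi
  have hφd : ∀ x, HasDerivAt φ btil x := by
    intro x
    rw [hφ]
    have h := ((hasDerivAt_id x).const_mul (-(Real.sqrt κ / (lam * τ)) * B)).add_const c0
    convert h using 1
    rfl
    rfl
    rfl
    rw [hbt]; ring
  have hC : ∀ x, HasDerivAt C (-S x * btil) x := by
    intro x
    exact (Real.hasDerivAt_cos (φ x)).comp x (hφd x)
  have hS : ∀ x, HasDerivAt S (C x * btil) x := by
    intro x
    exact (Real.hasDerivAt_sin (φ x)).comp x (hφd x)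
  have trig : ∀ x, S x * S x + C x * C x = 1 := by
    intro x
    have := Real.sin_sq_add_cos_sq (φ x)
    rw [hSdef, hCdef]; nlinarith [this]
  -- first-order system in clean form
  have hd1 : ∀ x, HasDerivAt f1 (-A * f2 x + m * Q2 x) x := by
    intro x
    have h := hsys1 y x
    convert h using 1
    rw [hA, hm, hQ2def]; ring
  have hd2 : ∀ x, HasDerivAt f2 (A * f1 x - m * Q1 x) x := by
    intro x
    have h := hsys2 y x
    convert h using 1
    rw [hA, hm, hQ1def]; ring
  have hd3 : ∀ x, HasDerivAt f3 (-A * f4 x + m * Q4 x) x := by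
    intro x
    have h := hsys3 y x
    convert h using 1
    rw [hA, hm, hQ4def]; ring
  have hd4 : ∀ x, HasDerivAt f4 (A * f3 x - m * Q3 x) x := by
    intro x
    have h := hsys4 y x
    convert h using 1
    rw [hA, hm, hQ3def]; ring
  -- derivatives of the Q's
  have hdQ1 : ∀ x, HasDerivAt Q1 (-(btil - A) * Q2 x - m * f2 x) x := by
    intro x
    have h := ((hS x).mul (hsys3 y x)).sub ((hC x).mul (hsys4 y x))
    rw [hQ1def]
    convert h using 1
    rfl
    rfl
    rfl
    rw [hQ2def, hA, hm]
    linear_combination (c * ν * f2 x) * (trig x)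
  have hdQ2 : ∀ x, HasDerivAt Q2 ((btil - A) * Q1 x + m * f1 x) x := by
    intro x
    have h := (((hC x).mul (hsys3 y x)).add ((hS x).mul (hsys4 y x))).neg
    rw [hQ2def]
    convert h using 1
    rfl
    rfl
    rfl
    rw [hQ1def, hA, hm]
    linear_combination (-(c * ν * f1 x)) * (trig x)
  have hdQ3 : ∀ x, HasDerivAt Q3 (-(btil - A) * Q4 x - m * f4 x) x := by
    intro x
    have h := ((hS x).mul (hsys1 y x)).sub ((hC x).mul (hsys2 y x))
    rw [hQ3def]
    convert h using 1
    rfl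
    rfl
    rfl
    rw [hQ4def, hA, hm]
    linear_combination (c * ν * f4 x) * (trig x)
  have hdQ4 : ∀ x, HasDerivAt Q4 ((btil - A) * Q3 x + m * f3 x) x := by
    intro x
    have h := (((hC x).mul (hsys1 y x)).add ((hS x).mul (hsys2 y x))).neg
    rw [hQ4def]
    convert h using 1
    rfl
    rfl
    rfl
    rw [hQ3def, hA, hm]
    linear_combination (-(c * ν * f3 x)) * (trig x)
  intro x
  refine ⟨?_, ?_, ?_, ?_⟩
  · exact fourth_order_key A m btil atil hta hAb f1 f2 Q1 Q2 hd1 hd2 hdQ1 hdQ2 x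
  · refine fourth_order_key A m btil atil hta hAb f2 (fun x => -f1 x) Q2 (fun x => -Q1 x)
      ?_ ?_ ?_ ?_ x
    · intro x; convert hd2 x using 1; ring
    · intro x; have := (hd1 x).neg; convert this using 1; rfl; rfl; rfl; ring
    · intro x; convert hdQ2 x using 1; ring
    · intro x; have := (hdQ1 x).neg; convert this using 1; rfl; rfl; rfl; ring
  · exact fourth_order_key A m btil atil hta hAb f3 f4 Q3 Q4 hd3 hd4 hdQ3 hdQ4 x
  · refine fourth_order_key A m btil atil hta hAb f4 (fun x => -f3 x) Q4 (fun x => -Q3 x)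
      ?_ ?_ ?_ ?_ x
    · intro x; convert hd4 x using 1; ring
    · intro x; have := (hd3 x).neg; convert this using 1; rfl; rfl; rfl; ring
    · intro x; convert hdQ4 x using 1; ring
    · intro x; have := (hdQ3 x).neg; convert this using 1; rfl; rfl; rfl; ring
end

section
/- Let λ ∈ {-1,1} and let d = (√B + τ|ν|)/√(λ+ν²), where B = ν²(τ²-1)-λ > 0, λ+ν² > 0, τ > 0. Then d > 1, d² = α1/α2 where α_{1,2} = (√κ/2)(|ν|√B ± B/τ) (for any κ > 0), and the curve γ(s) = (2/√κ)(1/√(d²-1)) (cos((√κ/2)ds), -λ sin((√κ/2)ds), d cos((√κ/2)s/d), λ d sin((√κ/2)s/d)) lies on H^3_1(κ/4) and is parametrized by arc length with respect to g0, i.e. g0(γ'(s),γ'(s)) is constant equal to ±1, namely |g0(γ'(s),γ'(s))| = 1. -/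
set_option maxHeartbeats 1600000 in
/-- Corollary 6.4, case B > 0: with d = (√B + τ|ν|)/√(λ+ν²) one has
d > 1, d² = α₁/α₂, and the curve γ lies on H³₁(κ/4) and is parametrized by arc length
(|g₀(γ',γ')| = 1). -/
theorem twisted_geodesic_arclength (κ τ lam ν : ℝ)
    (hκ : 0 < κ) (hτ : 0 < τ) (hlam : lam = 1 ∨ lam = -1)
    (hpos : 0 < lam + ν ^ 2)
    (B d α1 α2 : ℝ)
    (hBdef : B = ν ^ 2 * (τ ^ 2 - 1) - lam) (hB : 0 < B)
    (hd : d = (Real.sqrt B + τ * |ν|) / Real.sqrt (lam + ν ^ 2))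
    (hα1 : α1 = Real.sqrt κ / 2 * (|ν| * Real.sqrt B + B / τ))
    (hα2 : α2 = Real.sqrt κ / 2 * (|ν| * Real.sqrt B - B / τ))
    (γ : ℝ → Fin 4 → ℝ)
    (hγ : γ = fun s => (2 / Real.sqrt κ * (1 / Real.sqrt (d ^ 2 - 1))) •
      ![Real.cos (Real.sqrt κ / 2 * d * s), -lam * Real.sin (Real.sqrt κ / 2 * d * s),
        d * Real.cos (Real.sqrt κ / 2 * s / d), lam * d * Real.sin (Real.sqrt κ / 2 * s / d)]) :
    1 < d ∧ d ^ 2 = α1 / α2 ∧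
    (∀ s, γ s 0 ^ 2 + γ s 1 ^ 2 - γ s 2 ^ 2 - γ s 3 ^ 2 = -4 / κ) ∧
    (∀ s, |(deriv (fun s => γ s 0) s) ^ 2 + (deriv (fun s => γ s 1) s) ^ 2
      - (deriv (fun s => γ s 2) s) ^ 2 - (deriv (fun s => γ s 3) s) ^ 2| = 1) := by
  subst hγ
  set n := |ν| with hn'
  set sB := Real.sqrt B with hsB'
  set sL := Real.sqrt (lam + ν ^ 2) with hsL'
  have hsB : sB ^ 2 = B := Real.sq_sqrt hB.le
  have hsBpos : 0 < sB := Real.sqrt_pos.mpr hB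
  have hsL : sL ^ 2 = lam + ν ^ 2 := Real.sq_sqrt hpos.le
  have hsLpos : 0 < sL := Real.sqrt_pos.mpr hpos
  have hn : n ^ 2 = ν ^ 2 := sq_abs ν
  have hn0 : 0 ≤ n := abs_nonneg ν
  have hκpos : 0 < Real.sqrt κ := Real.sqrt_pos.mpr hκ
  have hκs : Real.sqrt κ ^ 2 = κ := Real.sq_sqrt hκ.le
  -- Part 1 : d > 1
  have hd1 : 1 < d := by
    rw [hd, lt_div_iff₀ hsLpos]
    nlinarith [mul_nonneg hτ.le hn0]
  -- Part 2 : d² = α₁/α₂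
  have htn : sB < τ * n := by nlinarith [mul_nonneg hτ.le hn0]
  have hα2pos : 0 < α2 := by
    rw [hα2]
    have : 0 < n * sB - B / τ := by
      rw [sub_pos, div_lt_iff₀ hτ]
      nlinarith
    positivity
  have hratio : d ^ 2 = α1 / α2 := by
    rw [eq_div_iff hα2pos.ne', hα1, hα2]
    have hd2 : d ^ 2 * sL ^ 2 = (sB + τ * n) ^ 2 := by
      rw [hd]; field_simp
    have hLB : sL ^ 2 = τ ^ 2 * n ^ 2 - sB ^ 2 := by
      linear_combination hsL + hsB + hBdef - τ ^ 2 * hn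
    have key2 : d ^ 2 * (n * sB * τ - B) * sL ^ 2 = (n * sB * τ + B) * sL ^ 2 := by
      linear_combination (n * sB * τ - B) * hd2 - (n * sB * τ + B) * hLB
        + (2 * τ ^ 2 * n ^ 2 + 2 * τ * n * sB) * hsB
    have key : d ^ 2 * (n * sB * τ - B) = n * sB * τ + B :=
      mul_right_cancel₀ (pow_ne_zero 2 hsLpos.ne') key2
    field_simp
    linear_combination key
  -- common facts for the curve
  have hdd : 0 < d ^ 2 - 1 := by nlinarith
  have hds : Real.sqrt (d ^ 2 - 1) ^ 2 = d ^ 2 - 1 := Real.sq_sqrt hdd.le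
  have hdspos : 0 < Real.sqrt (d ^ 2 - 1) := Real.sqrt_pos.mpr hdd
  have hdpos : (0:ℝ) < d := by nlinarith
  have hlam2 : lam ^ 2 = 1 := by rcases hlam with h | h <;> simp [h]
  set c : ℝ := 2 / Real.sqrt κ * (1 / Real.sqrt (d ^ 2 - 1)) with hc
  have hc2 : c ^ 2 * κ * (d ^ 2 - 1) = 4 := by
    rw [hc, mul_pow, div_pow, div_pow, one_pow, hκs, hds]
    field_simp; ring
  refine ⟨hd1, hratio, ?_, ?_⟩
  -- Part 3 : the curve lies on H³₁(κ/4)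
  · intro s
    simp only [Pi.smul_apply, smul_eq_mul, Matrix.cons_val_zero, Matrix.cons_val_one,
      Matrix.head_cons, Matrix.cons_val_two, Matrix.tail_cons, Matrix.cons_val_three,
      Matrix.head_fin_const]
    have h1 := Real.sin_sq_add_cos_sq (Real.sqrt κ / 2 * d * s)
    have h2 := Real.sin_sq_add_cos_sq (Real.sqrt κ / 2 * s / d)
    rw [eq_div_iff hκ.ne']
    linear_combination (κ * c ^ 2 * (Real.sin (Real.sqrt κ / 2 * d * s) ^ 2
        - d ^ 2 * Real.sin (Real.sqrt κ / 2 * s / d) ^ 2)) * hlam2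
      + κ * c ^ 2 * h1 - κ * c ^ 2 * d ^ 2 * h2 - hc2
  -- Part 4 : arc-length parametrization
  · intro s
    simp only [Pi.smul_apply, smul_eq_mul, Matrix.cons_val_zero, Matrix.cons_val_one,
      Matrix.head_cons, Matrix.cons_val_two, Matrix.tail_cons, Matrix.cons_val_three,
      Matrix.head_fin_const]
    set k1 : ℝ := Real.sqrt κ / 2 * d with hk1
    have hlin : HasDerivAt (fun s : ℝ => k1 * s) k1 s := by
      simpa using (hasDerivAt_id s).const_mul k1
    have hu : HasDerivAt (fun s : ℝ => Real.sqrt κ / 2 * s / d) (Real.sqrt κ / 2 / d) s := by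
      simpa using ((hasDerivAt_id s).const_mul (Real.sqrt κ / 2)).div_const d
    have H0 : HasDerivAt (fun s : ℝ => c * Real.cos (k1 * s))
        (c * (-Real.sin (k1 * s) * k1)) s :=
      ((Real.hasDerivAt_cos (k1 * s)).comp s hlin).const_mul c
    have H1 : HasDerivAt (fun s : ℝ => c * (-lam * Real.sin (k1 * s)))
        (c * (-lam * (Real.cos (k1 * s) * k1))) s :=
      (((Real.hasDerivAt_sin (k1 * s)).comp s hlin).const_mul (-lam)).const_mul c
    have H2 : HasDerivAt (fun s : ℝ => c * (d * Real.cos (Real.sqrt κ / 2 * s / d)))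
        (c * (d * (-Real.sin (Real.sqrt κ / 2 * s / d) * (Real.sqrt κ / 2 / d)))) s :=
      by
        have h := (Real.hasDerivAt_cos (Real.sqrt κ / 2 * s / d)).comp s hu
        exact (h.const_mul d).const_mul c
    have H3 : HasDerivAt (fun s : ℝ => c * (lam * d * Real.sin (Real.sqrt κ / 2 * s / d)))
        (c * (lam * d * (Real.cos (Real.sqrt κ / 2 * s / d) * (Real.sqrt κ / 2 / d)))) s :=
      (((Real.hasDerivAt_sin (Real.sqrt κ / 2 * s / d)).comp s hu).const_mul (lam * d)).const_mul c
    rw [H0.deriv, H1.deriv, H2.deriv, H3.deriv]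
    have h1 := Real.sin_sq_add_cos_sq (k1 * s)
    have h2 := Real.sin_sq_add_cos_sq (Real.sqrt κ / 2 * s / d)
    have hk : k1 ^ 2 = κ * d ^ 2 / 4 := by
      rw [hk1, mul_pow, div_pow, hκs]; ring
    have hdq : d ^ 2 * (Real.sqrt κ / 2 / d) ^ 2 = κ / 4 := by
      rw [div_div, div_pow, mul_pow, hκs, ← mul_div_assoc, mul_comm ((2:ℝ) ^ 2) (d ^ 2),
        mul_div_mul_left _ _ (pow_ne_zero 2 hdpos.ne')]
      norm_num
    have key : (c * (-Real.sin (k1 * s) * k1)) ^ 2 + (c * (-lam * (Real.cos (k1 * s) * k1))) ^ 2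
        - (c * (d * (-Real.sin (Real.sqrt κ / 2 * s / d) * (Real.sqrt κ / 2 / d)))) ^ 2
        - (c * (lam * d * (Real.cos (Real.sqrt κ / 2 * s / d) * (Real.sqrt κ / 2 / d)))) ^ 2
        = 1 := by
      linear_combination
        (c ^ 2 * (Real.sin (k1 * s) ^ 2 + lam ^ 2 * Real.cos (k1 * s) ^ 2)) * hk
        - (c ^ 2 * (Real.sin (Real.sqrt κ / 2 * s / d) ^ 2
            + lam ^ 2 * Real.cos (Real.sqrt κ / 2 * s / d) ^ 2)) * hdq
        + (c ^ 2 * κ * d ^ 2 / 4 * Real.cos (k1 * s) ^ 2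
            - c ^ 2 * κ / 4 * Real.cos (Real.sqrt κ / 2 * s / d) ^ 2) * hlam2
        + (c ^ 2 * κ * d ^ 2 / 4) * h1 - (c ^ 2 * κ / 4) * h2 + (1/4) * hc2
    rw [key, abs_one]
end

section
/- For λ ∈ {-1,1}, ν, τ, κ with κ, τ > 0 and B = ν²(τ²-1)-λ < 0, λ+ν² > 0, the curve γ(x) with components γ1 = (2√(λ+ν²)/√(-κB)) cos(αx) sinh(βx), γ2 = (2√(λ+ν²)/√(-κB)) sin(αx) sinh(βx), γ3 = (2/√κ)cos(αx)cosh(βx) - (2λτ|ν|/√(-κB)) sin(αx) sinh(βx), γ4 = (2/√κ)sin(αx)cosh(βx) + (2λτ|ν|/√(-κB)) cos(αx) sinh(βx), where α = -(√κ/2)B/(λτ) and β = |ν|√(-κB)/2, lies entirely on H^3_1(κ/4), i.e. γ1²+γ2²-γ3²-γ4² = -4/κ for all x. -/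
/-- case B < 0: the curve γ of Theorem 6.8 lies entirely on H³₁(κ/4):
γ₁² + γ₂² - γ₃² - γ₄² = -4/κ. -/
theorem curve_on_anti_de_sitter_B_neg (κ τ lam ν : ℝ)
    (hκ : 0 < κ) (hτ : 0 < τ) (hlam : lam = 1 ∨ lam = -1)
    (B α β : ℝ)
    (hBdef : B = ν ^ 2 * (τ ^ 2 - 1) - lam) (hB : B < 0)
    (hpos : 0 < lam + ν ^ 2)
    (hα : α = -(Real.sqrt κ / 2) * B / (lam * τ))
    (hβ : β = |ν| * Real.sqrt (-(κ * B)) / 2)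
    (γ1 γ2 γ3 γ4 : ℝ → ℝ)
    (hγ1 : γ1 = fun x => 2 * Real.sqrt (lam + ν ^ 2) / Real.sqrt (-(κ * B))
      * Real.cos (α * x) * Real.sinh (β * x))
    (hγ2 : γ2 = fun x => 2 * Real.sqrt (lam + ν ^ 2) / Real.sqrt (-(κ * B))
      * Real.sin (α * x) * Real.sinh (β * x))
    (hγ3 : γ3 = fun x => 2 / Real.sqrt κ * Real.cos (α * x) * Real.cosh (β * x)
      - 2 * lam * τ * |ν| / Real.sqrt (-(κ * B)) * Real.sin (α * x) * Real.sinh (β * x))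
    (hγ4 : γ4 = fun x => 2 / Real.sqrt κ * Real.sin (α * x) * Real.cosh (β * x)
      + 2 * lam * τ * |ν| / Real.sqrt (-(κ * B)) * Real.cos (α * x) * Real.sinh (β * x)) :
    ∀ x, γ1 x ^ 2 + γ2 x ^ 2 - γ3 x ^ 2 - γ4 x ^ 2 = -4 / κ := by
  intro x
  subst hγ1 hγ2 hγ3 hγ4
  have hκB : 0 < -(κ * B) := by nlinarith
  simp only
  set c := Real.cos (α * x) with hcdef
  set s := Real.sin (α * x) with hsdef
  set C := Real.cosh (β * x) with hCdef
  set S := Real.sinh (β * x) with hSdef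
  set a := Real.sqrt (-(κ * B)) with hadef
  set k := Real.sqrt κ with hkdef
  set p := Real.sqrt (lam + ν ^ 2) with hpdef
  set m := |ν| with hmdef
  have h1 : a ^ 2 = -(κ * B) := Real.sq_sqrt hκB.le
  have h2 : k ^ 2 = κ := Real.sq_sqrt hκ.le
  have h3 : p ^ 2 = lam + ν ^ 2 := Real.sq_sqrt hpos.le
  have h1' : a ≠ 0 := by rw [hadef]; positivity
  have h2' : k ≠ 0 := by rw [hkdef]; positivity
  have hκ' : κ ≠ 0 := ne_of_gt hκ
  have hl : lam ^ 2 = 1 := by rcases hlam with h | h <;> simp [h]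
  have hnn : m ^ 2 = ν ^ 2 := sq_abs ν
  have hc : c ^ 2 + s ^ 2 = 1 := Real.cos_sq_add_sin_sq _
  have hh : C ^ 2 = 1 + S ^ 2 := by
    have := Real.cosh_sq_sub_sinh_sq (β * x)
    rw [← hCdef, ← hSdef] at this; linarith
  linear_combination (norm := (field_simp; ring1))
    (4 * p ^ 2 * S ^ 2 / a ^ 2 - 4 * C ^ 2 / k ^ 2
      - 4 * lam ^ 2 * τ ^ 2 * m ^ 2 * S ^ 2 / a ^ 2) * hc
    + (4 * S ^ 2 / a ^ 2) * h3
    + (-(4 * lam ^ 2 * τ ^ 2 * S ^ 2 / a ^ 2)) * hnn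
    + (-(4 * τ ^ 2 * ν ^ 2 * S ^ 2 / a ^ 2)) * hl
    + (4 * S ^ 2 / a ^ 2) * hBdef
    + (-(4 * S ^ 2 / (κ * a ^ 2))) * h1
    + (4 * C ^ 2 / (k ^ 2 * κ)) * h2
    + (-(4 / κ)) * hh
end

section
/- Let F(x,y) = A(y)γ(x) where A(y) is a family of g0-orthogonal matrices commuting with J1, and suppose g_τ(F_x,F_x) = g_τ(E1|_F, F_x) = -λ(λ+ν²) with λ+ν² > 0. Then the curve γ satisfies g_τ(γ',γ') = -λ(λ+ν²) and g_τ(γ', E1|_γ) = -λ(λ+ν²); consequently the 'angle' quantity g_τ(γ', E1|_γ)/‖γ'‖_τ equals the constant -λ√(λ+ν²), i.e. γ is a general helix with axis E1 meeting the Hopf fibers at constant angle, the same in all cases B>0, B=0, B<0. -/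
open Matrix

/-- Proposition 7.1: if F(x,y) = A(y)γ(x) with A(y) g₀-orthogonal and
commuting with J₁ satisfies the helix conditions, then γ satisfies them too, and the
angle quantity g_τ(γ', E₁)/‖γ'‖_τ is the constant -λ√(λ+ν²): γ is a general helix
with axis E₁, meeting the Hopf fibers at the same constant angle in all cases. -/
theorem helix_curve_general_helix (κ τ lam ν : ℝ)
    (hκ : 0 < κ) (hτ : 0 < τ) (hlam : lam = 1 ∨ lam = -1)
    (hpos : 0 < lam + ν ^ 2)
    (ε J1 : Matrix (Fin 4) (Fin 4) ℝ)
    (hε : ε = !![1,0,0,0; 0,1,0,0; 0,0,-1,0; 0,0,0,-1])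
    (hJ1 : J1 = !![0,-1,0,0; 1,0,0,0; 0,0,0,-1; 0,0,1,0])
    (g0 : (Fin 4 → ℝ) → (Fin 4 → ℝ) → ℝ)
    (hg0 : g0 = fun u v => u 0 * v 0 + u 1 * v 1 - u 2 * v 2 - u 3 * v 3)
    (gτ : (Fin 4 → ℝ) → (Fin 4 → ℝ) → (Fin 4 → ℝ) → ℝ)
    (hgτ : gτ = fun p u v => g0 u v
      + (1 - τ ^ 2) * (κ / 4) * g0 u (J1.mulVec p) * g0 v (J1.mulVec p))
    (E1 : (Fin 4 → ℝ) → Fin 4 → ℝ)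
    (hE1 : E1 = fun p => (Real.sqrt κ / (2 * τ)) • J1.mulVec p)
    (A : ℝ → Matrix (Fin 4) (Fin 4) ℝ)
    (hA : ∀ y, (A y)ᵀ * ε * A y = ε) (hAJ : ∀ y, A y * J1 = J1 * A y)
    (γ γ' : ℝ → Fin 4 → ℝ)
    (hγdiff : ∀ i, Differentiable ℝ fun x => γ x i)
    (hγ' : γ' = fun x i => deriv (fun t => γ t i) x)
    (F Fx : ℝ → ℝ → Fin 4 → ℝ)
    (hF : F = fun x y => (A y).mulVec (γ x))
    (hFx : Fx = fun x y i => deriv (fun t => F t y i) x)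
    (hcond1 : ∀ x y, gτ (F x y) (Fx x y) (Fx x y) = -lam * (lam + ν ^ 2))
    (hcond2 : ∀ x y, gτ (F x y) (E1 (F x y)) (Fx x y) = -lam * (lam + ν ^ 2)) :
    (∀ x, gτ (γ x) (γ' x) (γ' x) = -lam * (lam + ν ^ 2)) ∧
    (∀ x, gτ (γ x) (E1 (γ x)) (γ' x) = -lam * (lam + ν ^ 2)) ∧
    (∀ x, gτ (γ x) (E1 (γ x)) (γ' x) / Real.sqrt |gτ (γ x) (γ' x) (γ' x)|
      = -lam * Real.sqrt (lam + ν ^ 2)) := by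
  
  -- g0 via ε
  have hg0ε : ∀ u v, g0 u v = u ⬝ᵥ ε.mulVec v := by
    intro u v
    rw [hg0, hε]
    simp [Matrix.mulVec, dotProduct, Fin.sum_univ_four, Matrix.cons_val_zero,
      Matrix.cons_val_one, Matrix.head_cons, Matrix.cons_val_two, Matrix.tail_cons,
      Matrix.cons_val_three, Matrix.vecHead, Matrix.vecTail, Function.comp]
    ring
  -- A y preserves g0
  have horth : ∀ y u v, g0 ((A y).mulVec u) ((A y).mulVec v) = g0 u v := by
    intro y u v
    rw [hg0ε, hg0ε, Matrix.mulVec_mulVec, Matrix.dotProduct_mulVec,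
      ← Matrix.vecMul_transpose, Matrix.vecMul_vecMul, ← Matrix.mul_assoc, hA,
      ← Matrix.dotProduct_mulVec]
  -- A y commutes with J1 on vectors
  have hcomm : ∀ y p, J1.mulVec ((A y).mulVec p) = (A y).mulVec (J1.mulVec p) := by
    intro y p
    rw [Matrix.mulVec_mulVec, Matrix.mulVec_mulVec, hAJ]
  -- gτ invariance
  have hinv : ∀ y p u v, gτ ((A y).mulVec p) ((A y).mulVec u) ((A y).mulVec v)
      = gτ p u v := by
    intro y p u v
    rw [hgτ]
    simp only
    rw [hcomm, horth, horth, horth]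
  -- E1 commutes with A y
  have hE1comm : ∀ y p, E1 ((A y).mulVec p) = (A y).mulVec (E1 p) := by
    intro y p
    rw [hE1]
    simp only
    rw [hcomm, Matrix.mulVec_smul]
  -- Fx = A y *ᵥ γ'
  have hFx' : ∀ x y, Fx x y = (A y).mulVec (γ' x) := by
    intro x y
    funext i
    rw [hFx, hF, hγ']
    simp only [Matrix.mulVec, dotProduct]
    rw [deriv_fun_sum]
    · exact Finset.sum_congr rfl fun j _ => by
        rw [deriv_const_mul _ ((hγdiff j).differentiableAt)]
    · intro j _
      exact ((hγdiff j).differentiableAt).const_mul _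
  have h1 : ∀ x, gτ (γ x) (γ' x) (γ' x) = -lam * (lam + ν ^ 2) := by
    intro x
    have := hcond1 x 0
    rwa [hF, hFx', hinv] at this
  have h2 : ∀ x, gτ (γ x) (E1 (γ x)) (γ' x) = -lam * (lam + ν ^ 2) := by
    intro x
    have := hcond2 x 0
    simp only [hF, hFx'] at this
    rwa [hE1comm, hinv] at this
  refine ⟨h1, h2, fun x => ?_⟩
  have hl1 : |lam| = 1 := by rcases hlam with h | h <;> simp [h]
  have habs : |gτ (γ x) (γ' x) (γ' x)| = lam + ν ^ 2 := by
    rw [h1 x, neg_mul, abs_neg, abs_mul, hl1, one_mul, abs_of_pos hpos]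
  rw [h2 x, habs]
  rw [neg_mul, neg_mul, neg_div, mul_div_assoc, Real.div_sqrt]
end
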